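/- Perron's method on graphs: let D ⊆ V be a subset of a finite connected simple graph with ∂D ≠ ∅ and g: ∂D → ℝ bounded. Define S_g = {φ : φ subharmonic in D and φ ≤ g on ∂D} (nonempty since large negative constants belong to it) and u(x) = sup_{φ∈S_g} φ(x). Then u is harmonic in D, i.e. u(v) = (1/deg v)·Σ_{w∼v} u(w) for every v ∈ D. -/
import Mathlib


open Finset
open scoped Classical

/-- Normalized discrete Laplacian `Δu(v) = (1/deg v) Σ_{w∼v} (u(w) − u(v))`. -/
noncomputable def lap {V : Type*} [Fintype V] (G : SimpleGraph V) (u : V → ℝ) (v : V) : ℝ :=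
  (1 / (G.degree v : ℝ)) * ∑ w ∈ G.neighborFinset v, (u w - u v)

/-- Boundary of `D`: vertices outside `D` adjacent to some vertex of `D`. -/
noncomputable def bdry {V : Type*} [Fintype V] (G : SimpleGraph V) (D : Finset V) : Finset V :=
  Finset.univ.filter fun w => w ∉ D ∧ ∃ v ∈ D, G.Adj w v

/-- The Perron family `S_g`: functions subharmonic in `D` and `≤ g` on `∂D`. -/
def perronFam {V : Type*} [Fintype V] (G : SimpleGraph V) (D : Finset V) (g : V → ℝ) :
    Set (V → ℝ) :=
  {φ | (∀ v ∈ D, φ v ≤ (1 / (G.degree v : ℝ)) * ∑ w ∈ G.neighborFinset v, φ w) ∧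
    ∀ w ∈ bdry G D, φ w ≤ g w}

/-- The Perron function `u(x) = sup_{φ ∈ S_g} φ(x)`. -/
noncomputable def perronFn {V : Type*} [Fintype V] (G : SimpleGraph V) (D : Finset V)
    (g : V → ℝ) (x : V) : ℝ :=
  sSup ((fun φ : V → ℝ => φ x) '' perronFam G D g)

lemma bdry_spec {V : Type*} [Fintype V] (G : SimpleGraph V) (D : Finset V) (w : V) :
    w ∈ bdry G D ↔ (w ∉ D ∧ ∃ v ∈ D, G.Adj w v) := by
  simp [bdry]

lemma neighbor_mem_union {V : Type*} [Fintype V] (G : SimpleGraph V) (D : Finset V)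
    {v w : V} (hv : v ∈ D) (h : G.Adj v w) : w ∈ D ∨ w ∈ bdry G D := by
  by_cases hw : w ∈ D
  · exact Or.inl hw
  · exact Or.inr ((bdry_spec G D w).mpr ⟨hw, v, hv, h.symm⟩)

lemma perronFam_nonempty {V : Type*} [Fintype V] (G : SimpleGraph V) (D : Finset V)
    (hD : (bdry G D).Nonempty) (g : V → ℝ) : (perronFam G D g).Nonempty := by
  set c : ℝ := min ((bdry G D).inf' hD g) 0 with hc
  refine ⟨fun _ => c, ?_, ?_⟩
  · intro v _
    have hsum : ∑ _w ∈ G.neighborFinset v, c = (G.degree v : ℝ) * c := by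
      rw [Finset.sum_const, nsmul_eq_mul, G.card_neighborFinset_eq_degree]
    rw [hsum]
    rcases Nat.eq_zero_or_pos (G.degree v) with hd | hd
    · simp [hd]
      exact min_le_right _ _
    · have hd' : (0 : ℝ) < (G.degree v : ℝ) := by exact_mod_cast hd
      rw [one_div, inv_mul_cancel_left₀ hd'.ne']
  · intro w hw
    exact (min_le_left _ _).trans (Finset.inf'_le g hw)

lemma max_principle {V : Type*} [Fintype V] [DecidableEq V] (G : SimpleGraph V)
    (hconn : G.Connected) (D : Finset V) (hD : (bdry G D).Nonempty) (g : V → ℝ)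
    {φ : V → ℝ} (hφ : φ ∈ perronFam G D g) {x : V} (hx : x ∈ D ∪ bdry G D) :
    φ x ≤ (bdry G D).sup' hD g := by
  have hT : (D ∪ bdry G D).Nonempty := ⟨hD.choose, Finset.mem_union_right _ hD.choose_spec⟩
  set M : ℝ := (D ∪ bdry G D).sup' hT φ with hM
  have hleM : ∀ y ∈ D ∪ bdry G D, φ y ≤ M := fun y hy => Finset.le_sup' φ hy
  -- propagation of the maximum
  have prop : ∀ v ∈ D, φ v = M → ∀ w ∈ G.neighborFinset v, φ w = M := by
    intro v hvD hvM w hw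
    have hd : 0 < (G.degree v : ℝ) := by
      have : 0 < (G.neighborFinset v).card := Finset.card_pos.mpr ⟨w, hw⟩
      rw [G.card_neighborFinset_eq_degree] at this
      exact_mod_cast this
    have hnb : ∀ y ∈ G.neighborFinset v, φ y ≤ M := by
      intro y hy
      have hadjy : G.Adj v y := by simpa using hy
      rcases neighbor_mem_union G D hvD hadjy with h | h
      · exact hleM y (Finset.mem_union_left _ h)
      · exact hleM y (Finset.mem_union_right _ h)
    have hsub := hφ.1 v hvD
    rw [one_div, inv_mul_eq_div, le_div_iff₀ hd] at hsub
    have hsum0 : ∑ y ∈ G.neighborFinset v, (M - φ y) = 0 := by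
      apply le_antisymm
      · have h1 : ∑ y ∈ G.neighborFinset v, (M - φ y)
            = (G.degree v : ℝ) * M - ∑ y ∈ G.neighborFinset v, φ y := by
          rw [Finset.sum_sub_distrib, Finset.sum_const, nsmul_eq_mul,
            G.card_neighborFinset_eq_degree]
        rw [h1, sub_nonpos]
        calc (G.degree v : ℝ) * M = φ v * (G.degree v) := by rw [hvM, mul_comm]
        _ ≤ _ := hsub
      · exact Finset.sum_nonneg fun y hy => sub_nonneg.mpr (hnb y hy)
    have := (Finset.sum_eq_zero_iff_of_nonneg
      (fun y hy => sub_nonneg.mpr (hnb y hy))).mp hsum0 w hw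
    linarith [this]
  -- there is a boundary maximizer
  obtain ⟨x₀, hx₀T, hx₀M⟩ := Finset.exists_mem_eq_sup' hT φ
  obtain ⟨b, hb⟩ := hD
  have key : ∀ (a b₀ : V) (p : G.Walk a b₀), b₀ ∈ bdry G D → a ∈ D → φ a = M →
      ∃ y ∈ bdry G D, φ y = M := by
    intro a b₀ p
    induction p with
    | nil =>
      intro hb₀ haD _
      exact absurd ((bdry_spec G D _).mp hb₀).1 (by simpa using haD)
    | @cons a c b' hadj q ih =>
      intro hb₀ haD haM
      have hcM : φ c = M := prop a haD haM c (by simpa using hadj)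
      rcases neighbor_mem_union G D haD hadj with hcD | hcB
      · exact ih hb₀ hcD hcM
      · exact ⟨c, hcB, hcM⟩
  have hbdryMax : ∃ y ∈ bdry G D, φ y = M := by
    rcases Finset.mem_union.mp hx₀T with hx₀D | hx₀B
    · exact key x₀ b (hconn.preconnected x₀ b).some hb hx₀D hx₀M.symm
    · exact ⟨x₀, hx₀B, hx₀M.symm⟩
  obtain ⟨y, hyB, hyM⟩ := hbdryMax
  calc φ x ≤ M := hleM x hx
  _ = φ y := hyM.symm
  _ ≤ g y := hφ.2 y hyB
  _ ≤ _ := Finset.le_sup' g hyB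

/-- Perron's method on graphs: the pointwise supremum of the Perron family is
harmonic in `D`. -/
theorem perron_method {V : Type*} [Fintype V] [DecidableEq V]
    (G : SimpleGraph V) (hconn : G.Connected)
    (D : Finset V) (hD : (bdry G D).Nonempty) (g : V → ℝ) :
    ∀ v ∈ D, perronFn G D g v =
      (1 / (G.degree v : ℝ)) * ∑ w ∈ G.neighborFinset v, perronFn G D g w := by
  intro v hv
  have hne : (perronFam G D g).Nonempty := perronFam_nonempty G D hD g
  have himne : ∀ x : V, ((fun φ : V → ℝ => φ x) '' perronFam G D g).Nonempty :=
    fun x => hne.image _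
  have hbdd : ∀ x ∈ D ∪ bdry G D, BddAbove ((fun φ : V → ℝ => φ x) '' perronFam G D g) := by
    intro x hx
    refine ⟨(bdry G D).sup' hD g, ?_⟩
    rintro r ⟨φ, hφ, rfl⟩
    exact max_principle G hconn D hD g hφ hx
  have hle : ∀ φ ∈ perronFam G D g, ∀ x ∈ D ∪ bdry G D, φ x ≤ perronFn G D g x :=
    fun φ hφ x hx => le_csSup (hbdd x hx) ⟨φ, hφ, rfl⟩
  have hnbU : ∀ {v' : V}, v' ∈ D → ∀ w ∈ G.neighborFinset v', w ∈ D ∪ bdry G D := by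
    intro v' hv' w hw
    rcases neighbor_mem_union G D hv' ((by simpa using hw : G.Adj v' w)) with h | h
    · exact Finset.mem_union_left _ h
    · exact Finset.mem_union_right _ h
  -- u itself is in the family
  have huS : perronFn G D g ∈ perronFam G D g := by
    constructor
    · intro v' hv'
      apply csSup_le (himne v')
      rintro r ⟨φ, hφ, rfl⟩
      refine (hφ.1 v' hv').trans ?_
      refine mul_le_mul_of_nonneg_left ?_ (by positivity)
      exact Finset.sum_le_sum fun w hw => hle φ hφ w (hnbU hv' w hw)
    · intro w hw
      apply csSup_le (himne w)
      rintro r ⟨φ, hφ, rfl⟩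
      exact hφ.2 w hw
  have h1 : perronFn G D g v ≤
      (1 / (G.degree v : ℝ)) * ∑ w ∈ G.neighborFinset v, perronFn G D g w := huS.1 v hv
  -- the harmonic modification at v
  set t : ℝ := (1 / (G.degree v : ℝ)) * ∑ w ∈ G.neighborFinset v, perronFn G D g w with ht
  set φ' : V → ℝ := Function.update (perronFn G D g) v t with hφ'def
  have hup : ∀ x, perronFn G D g x ≤ φ' x := by
    intro x
    by_cases hx : x = v
    · subst hx; rw [hφ'def, Function.update_self]; exact h1
    · rw [hφ'def, Function.update_of_ne hx]
  have hφ'S : φ' ∈ perronFam G D g := by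
    constructor
    · intro v' hv'
      by_cases hvv : v' = v
      · subst hvv
        have hsum : ∑ w ∈ G.neighborFinset v', φ' w
            = ∑ w ∈ G.neighborFinset v', perronFn G D g w := by
          refine Finset.sum_congr rfl fun w hw => ?_
          have hadjw : G.Adj v' w := by simpa using hw
          have hwv : w ≠ v' := fun h => G.irrefl (by rw [h] at hadjw; exact hadjw)
          rw [hφ'def, Function.update_of_ne hwv]
        rw [hsum, hφ'def, Function.update_self]
      · rw [hφ'def, Function.update_of_ne hvv]
        refine (huS.1 v' hv').trans ?_
        refine mul_le_mul_of_nonneg_left ?_ (by positivity)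
        exact Finset.sum_le_sum fun w _ => hup w
    · intro w hw
      have hwv : w ≠ v := fun h => ((bdry_spec G D w).mp hw).1 (by rw [h]; exact hv)
      rw [hφ'def, Function.update_of_ne hwv]
      exact huS.2 w hw
  have h2 : t ≤ perronFn G D g v := by
    have := hle φ' hφ'S v (Finset.mem_union_left _ hv)
    rwa [hφ'def, Function.update_self] at this
  exact le_antisymm h1 h2
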